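/- arXiv:0709.4175 — 5 statements merged into one kernel-verified Lean document; each statement's English description precedes it below -/
import Mathlib

section
/- For n ≥ 3, the cardinality of the rook monoid satisfies the recursion |R_n| = 2n·|R_{n-1}| − (n−1)²·|R_{n-2}|. -/
open Finset

/-- Build a partial equivalence from a finset together with an embedding of it. -/
private noncomputable def rookG {n : ℕ} :
    (Σ s : Finset (Fin n), (↥s ↪ Fin n)) → (Fin n ≃. Fin n) :=
  fun p =>
  { toFun := fun a => if h : a ∈ p.1 then some (p.2 ⟨a, h⟩) else none
    invFun := fun b => (Function.partialInv p.2 b).map Subtype.val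
    inv := by
      intro a b
      obtain ⟨s, e⟩ := p
      simp only [Option.mem_def, Option.map_eq_some_iff]
      constructor
      · rintro ⟨x, hx, rfl⟩
        have hxb : e x = b := (Function.partialInv_of_injective e.injective x b).1 hx
        rw [dif_pos x.2]
        simp [hxb]
      · intro hb
        by_cases h : a ∈ s
        · rw [dif_pos h] at hb
          refine ⟨⟨a, h⟩, ?_, rfl⟩
          exact (Function.partialInv_of_injective e.injective ⟨a, h⟩ b).2
            (Option.some_injective _ hb)
        · rw [dif_neg h] at hb; cases hb }

private lemma rookG_apply {n : ℕ} (s : Finset (Fin n)) (e : ↥s ↪ Fin n) (a : Fin n) :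
    (rookG ⟨s, e⟩ : Fin n ≃. Fin n) a = if h : a ∈ s then some (e ⟨a, h⟩) else none := rfl

private lemma rookG_bijective {n : ℕ} : Function.Bijective (rookG (n := n)) := by
  constructor
  · rintro ⟨s, e⟩ ⟨s', e'⟩ h
    have hfun : ∀ a, (rookG ⟨s, e⟩ : Fin n ≃. Fin n) a = (rookG ⟨s', e'⟩ : Fin n ≃. Fin n) a :=
      fun a => by rw [h]
    have hs : s = s' := by
      ext a
      have := hfun a
      rw [rookG_apply, rookG_apply] at this
      by_cases h1 : a ∈ s <;> by_cases h2 : a ∈ s' <;>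
        simp [h1, h2] at this ⊢
    subst hs
    have he : e = e' := by
      ext ⟨a, ha⟩
      have := hfun a
      rw [rookG_apply, rookG_apply, dif_pos ha, dif_pos ha] at this
      exact congrArg Fin.val (Option.some_injective _ this)
    rw [he]
  · intro f
    classical
    refine ⟨⟨Finset.univ.filter (fun a => (f a).isSome),
      ⟨fun a => (f a.1).get ((Finset.mem_filter.1 a.2).2), ?_⟩⟩, ?_⟩
    · rintro ⟨a, ha⟩ ⟨b, hb⟩ hab
      simp only at hab
      have h1 : f a = some ((f a).get ((Finset.mem_filter.1 ha).2)) := (Option.some_get _).symm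
      have h2 : f b = some ((f b).get ((Finset.mem_filter.1 hb).2)) := (Option.some_get _).symm
      rw [hab] at h1
      exact Subtype.ext (f.inj (Option.mem_def.2 h1) (Option.mem_def.2 h2))
    · apply PEquiv.ext
      intro a
      rw [rookG_apply]
      by_cases h : a ∈ Finset.univ.filter (fun a => (f a).isSome)
      · rw [dif_pos h]
        exact Option.some_get _
      · rw [dif_neg h]
        simp only [Finset.mem_filter, Finset.mem_univ, true_and] at h
        exact (Option.not_isSome_iff_eq_none.1 h).symm

private def tA (m : ℕ) : ℕ := ∑ k ∈ range (m + 1), m.choose k ^ 2 * k.factorial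

private def tC (m : ℕ) : ℕ :=
  ∑ k ∈ range (m + 1), m.choose k * (m + 1).choose k * k.factorial

private lemma card_pequiv (n : ℕ) : Nat.card (Fin n ≃. Fin n) = tA n := by
  rw [Nat.card_congr (Equiv.ofBijective _ (rookG_bijective (n := n))).symm,
    Nat.card_eq_fintype_card, Fintype.card_sigma]
  have h1 : ∀ s : Finset (Fin n), Fintype.card (↥s ↪ Fin n) = n.descFactorial s.card := by
    intro s
    rw [Fintype.card_embedding_eq, Fintype.card_coe, Fintype.card_fin]
  simp_rw [h1]
  rw [show (Finset.univ : Finset (Finset (Fin n))) = (Finset.univ : Finset (Fin n)).powerset from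
    Finset.powerset_univ.symm]
  rw [Finset.sum_powerset]
  have h2 : ∀ j ∈ range (#(Finset.univ : Finset (Fin n)) + 1),
      ∑ t ∈ Finset.powersetCard j (Finset.univ : Finset (Fin n)), n.descFactorial #t =
        n.choose j * n.descFactorial j := by
    intro j _
    rw [Finset.sum_powersetCard j Finset.univ (fun k => n.descFactorial k), smul_eq_mul,
      Finset.card_univ, Fintype.card_fin]
  rw [Finset.sum_congr rfl h2, Finset.card_univ, Fintype.card_fin]
  unfold tA
  refine Finset.sum_congr rfl fun k _ => ?_
  rw [Nat.descFactorial_eq_factorial_mul_choose]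
  ring

private lemma T1 (m j : ℕ) :
    (m + 1).choose (j + 1) ^ 2 * (j + 1).factorial =
      m.choose (j + 1) * (m + 1).choose (j + 1) * (j + 1).factorial +
        (m + 1) * (m.choose j ^ 2 * j.factorial) := by
  have key := Nat.add_one_mul_choose_eq m j
  have pas := Nat.choose_succ_succ m j
  rw [Nat.factorial_succ]
  simp only [Nat.succ_eq_add_one] at key pas
  zify at key pas ⊢
  linear_combination (((m + 1).choose (j + 1) : ℕ) : ℤ) * ((j : ℤ) + 1) * (j.factorial : ℤ) * pas -
    ((m.choose j : ℕ) : ℤ) * (j.factorial : ℤ) * key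

private lemma T2 (m j : ℕ) :
    (m + 1).choose (j + 1) * (m + 2).choose (j + 1) * (j + 1).factorial =
      (m + 1).choose (j + 1) ^ 2 * (j + 1).factorial +
        (m + 1) * (m.choose j * (m + 1).choose j * j.factorial) := by
  have key := Nat.add_one_mul_choose_eq m j
  have pas := Nat.choose_succ_succ (m + 1) j
  rw [Nat.factorial_succ]
  simp only [Nat.succ_eq_add_one] at key pas
  rw [show m + 1 + 1 = m + 2 from rfl] at pas
  zify at key pas ⊢
  linear_combination (((m + 1).choose (j + 1) : ℕ) : ℤ) * ((j : ℤ) + 1) * (j.factorial : ℤ) * pas -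
    (((m + 1).choose j : ℕ) : ℤ) * (j.factorial : ℤ) * key

private lemma h1 (m : ℕ) : tA (m + 1) = (m + 1) * tA m + tC m := by
  unfold tA tC
  rw [Finset.sum_range_succ' (fun k => (m + 1).choose k ^ 2 * k.factorial)]
  simp only [T1]
  rw [Finset.sum_add_distrib, ← Finset.mul_sum,
    Finset.sum_range_succ (fun j => m.choose (j + 1) * (m + 1).choose (j + 1) * (j + 1).factorial),
    Nat.choose_eq_zero_of_lt (show m < m + 1 by omega),
    Finset.sum_range_succ' (fun k => m.choose k * (m + 1).choose k * k.factorial)]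
  simp [Nat.factorial]
  ring

private lemma h2 (m : ℕ) : tC (m + 1) = tA (m + 1) + (m + 1) * tC m := by
  unfold tA tC
  rw [Finset.sum_range_succ' (fun k => (m + 1).choose k * (m + 2).choose k * k.factorial)]
  simp only [T2]
  rw [Finset.sum_add_distrib, ← Finset.mul_sum,
    Finset.sum_range_succ' (fun k => (m + 1).choose k ^ 2 * k.factorial)]
  simp [Nat.factorial]
  ring

/-- For `n ≥ 3`, `|R_n| = 2n|R_{n-1}| - (n-1)^2 |R_{n-2}|`, where `R_m` is the rook
monoid of partial permutations of an `m`-element set. -/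
theorem rook_monoid_card_recursion (n : ℕ) (hn : 3 ≤ n) :
    (Nat.card (Fin n ≃. Fin n) : ℤ) =
      2 * n * Nat.card (Fin (n - 1) ≃. Fin (n - 1)) -
        (n - 1 : ℤ) ^ 2 * Nat.card (Fin (n - 2) ≃. Fin (n - 2)) := by
  obtain ⟨m, rfl⟩ : ∃ m, n = m + 2 := ⟨n - 2, by omega⟩
  have e1 : m + 2 - 1 = m + 1 := by omega
  have e2 : m + 2 - 2 = m := by omega
  rw [e1, e2, card_pequiv, card_pequiv, card_pequiv]
  have E1 := congrArg (Nat.cast : ℕ → ℤ) (h1 (m + 1))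
  have E2 := congrArg (Nat.cast : ℕ → ℤ) (h2 m)
  have E3 := congrArg (Nat.cast : ℕ → ℤ) (h1 m)
  push_cast at E1 E2 E3 ⊢
  linear_combination E1 + E2 - ((m : ℤ) + 1) * E3
end

section
/- In ℂR_n with groupoid basis elements ⌊s⌋ = Σ_{t ≤ s} (−1)^{rk(s)−rk(t)} t, multiplication satisfies ⌊s⌋·⌊t⌋ = ⌊st⌋ if dom(s) = ran(t), and ⌊s⌋·⌊t⌋ = 0 otherwise. -/
open Finset

/-- The rook monoid structure on partial permutations: maps act on the left, so
`s * t = s ∘ t`. -/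
instance rookMonoid (n : ℕ) : Monoid (Fin n ≃. Fin n) where
  mul s t := t.trans s
  mul_assoc s t u := (PEquiv.trans_assoc u t s).symm
  one := PEquiv.refl _
  one_mul s := PEquiv.trans_refl s
  mul_one s := PEquiv.refl_trans s

/-- The restriction order on partial permutations. -/
def rookLe {n : ℕ} (s t : Fin n ≃. Fin n) : Prop :=
  ∀ x, s x = none ∨ s x = t x

instance {n : ℕ} (s t : Fin n ≃. Fin n) : Decidable (rookLe s t) :=
  inferInstanceAs (Decidable (∀ x, s x = none ∨ s x = t x))

/-- The rank of a partial permutation: the size of its domain. -/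
def rookRk {n : ℕ} (s : Fin n ≃. Fin n) : ℕ :=
  (Finset.univ.filter fun x => (s x).isSome).card

/-- The domain of a partial permutation. -/
def rookDom {n : ℕ} (s : Fin n ≃. Fin n) : Set (Fin n) := {x | s x ≠ none}

/-- The range of a partial permutation. -/
def rookRan {n : ℕ} (s : Fin n ≃. Fin n) : Set (Fin n) := {y | s.symm y ≠ none}

noncomputable instance {n : ℕ} : Fintype (Fin n ≃. Fin n) :=
  Fintype.ofInjective (fun f => (f : Fin n → Option (Fin n))) DFunLike.coe_injective

/-- The groupoid-basis element `⌊s⌋ = ∑_{t ≤ s} (−1)^{rk(s) − rk(t)} t` of the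
semigroup algebra `ℂ R_n`. -/
noncomputable def rookBr {n : ℕ} (s : Fin n ≃. Fin n) :
    MonoidAlgebra ℂ (Fin n ≃. Fin n) :=
  ∑ t ∈ Finset.univ.filter (fun t => rookLe t s),
    ((-1 : ℂ) ^ (rookRk s - rookRk t)) • MonoidAlgebra.single t 1


namespace RookAux
variable {n : ℕ}

def domF (s : Fin n ≃. Fin n) : Finset (Fin n) := Finset.univ.filter fun x => (s x).isSome

lemma mem_domF {s : Fin n ≃. Fin n} {x : Fin n} : x ∈ domF s ↔ (s x).isSome := by
  simp [domF]

lemma rookRk_eq (s : Fin n ≃. Fin n) : rookRk s = (domF s).card := rfl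

def restrict (s : Fin n ≃. Fin n) (A : Finset (Fin n)) : Fin n ≃. Fin n :=
  (PEquiv.ofSet {x | x ∈ A}).trans s

lemma restrict_apply (s : Fin n ≃. Fin n) (A : Finset (Fin n)) (x : Fin n) :
    restrict s A x = if x ∈ A then s x else none := by
  by_cases h : x ∈ A <;> simp [restrict, PEquiv.trans, PEquiv.ofSet, h]

lemma mul_apply (s t : Fin n ≃. Fin n) (x : Fin n) : (s * t) x = (t x).bind s := rfl

lemma rookLe_restrict (s : Fin n ≃. Fin n) (A : Finset (Fin n)) : rookLe (restrict s A) s := by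
  intro x
  rw [restrict_apply]
  split_ifs with h
  · exact Or.inr rfl
  · exact Or.inl rfl

lemma domF_restrict {s : Fin n ≃. Fin n} {A : Finset (Fin n)} (h : A ⊆ domF s) :
    domF (restrict s A) = A := by
  ext x
  simp only [mem_domF, restrict_apply]
  split_ifs with hx
  · simpa using ⟨fun _ => hx, fun _ => mem_domF.1 (h hx)⟩
  · simp [hx]

lemma restrict_domF_eq {s a : Fin n ≃. Fin n} (h : rookLe a s) : restrict s (domF a) = a := by
  apply PEquiv.ext
  intro x
  rw [restrict_apply]
  rcases h x with h1 | h1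
  · rw [h1]
    simp [mem_domF, h1]
  · by_cases hx : x ∈ domF a
    · simp [hx, h1]
    · have ha : a x = none := by
        rw [mem_domF, Option.not_isSome_iff_eq_none] at hx
        exact hx
      simp [hx, ha]

def pre (t : Fin n ≃. Fin n) (A : Finset (Fin n)) : Finset (Fin n) :=
  Finset.univ.filter fun x => ∃ y ∈ A, t x = some y

lemma mem_pre {t : Fin n ≃. Fin n} {A : Finset (Fin n)} {x : Fin n} :
    x ∈ pre t A ↔ ∃ y ∈ A, t x = some y := by simp [pre]

lemma restrict_mul_restrict (s t : Fin n ≃. Fin n) (A B : Finset (Fin n)) :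
    restrict s A * restrict t B = restrict (s * t) (B ∩ pre t A) := by
  apply PEquiv.ext
  intro x
  rw [mul_apply, restrict_apply, restrict_apply, mul_apply]
  by_cases hB : x ∈ B
  · cases ht : t x with
    | none => simp [ht, hB, mem_pre]
    | some y =>
      by_cases hA : y ∈ A
      · have hx : x ∈ B ∩ pre t A := by
          rw [Finset.mem_inter, mem_pre]
          exact ⟨hB, y, hA, ht⟩
        simp [ht, hx, hB, hA, restrict_apply]
      · have hx : x ∉ B ∩ pre t A := by
          intro hmem
          rcases mem_pre.1 (Finset.mem_inter.1 hmem).2 with ⟨y', hy', hty'⟩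
          rw [ht] at hty'
          have : y = y' := Option.some_injective _ hty'
          exact hA (this ▸ hy')
        simp [ht, hx, hB, hA, restrict_apply]
  · simp [hB, mem_pre]

lemma neg_one_pow_sub {m k : ℕ} (h : k ≤ m) :
    ((-1 : ℂ)) ^ (m - k) = (-1) ^ m * (-1) ^ k := by
  have h2 : m + k = (m - k) + 2 * k := by omega
  rw [← pow_add, h2, pow_add, pow_mul]
  norm_num

lemma br_eq (u : Fin n ≃. Fin n) :
    rookBr u = ∑ A ∈ (domF u).powerset,
      ((-1 : ℂ) ^ rookRk u * (-1) ^ A.card) • MonoidAlgebra.single (restrict u A) 1 := by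
  rw [rookBr]
  refine Finset.sum_nbij' (fun a => domF a) (fun A => restrict u A) ?_ ?_ ?_ ?_ ?_
  · intro a ha
    rw [Finset.mem_filter] at ha
    rw [Finset.mem_powerset]
    intro x hx
    rw [mem_domF] at hx ⊢
    rcases ha.2 x with h1 | h1
    · rw [h1] at hx; simp at hx
    · rwa [← h1]
  · intro A hA
    rw [Finset.mem_filter]
    exact ⟨Finset.mem_univ _, rookLe_restrict u A⟩
  · intro a ha
    exact restrict_domF_eq (Finset.mem_filter.1 ha).2
  · intro A hA
    exact domF_restrict (Finset.mem_powerset.1 hA)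
  · intro a ha
    have hsub : domF a ⊆ domF u := by
      intro x hx
      rw [mem_domF] at hx ⊢
      rcases (Finset.mem_filter.1 ha).2 x with h1 | h1
      · rw [h1] at hx; simp at hx
      · rwa [← h1]
    rw [restrict_domF_eq (Finset.mem_filter.1 ha).2, rookRk_eq u, rookRk_eq a,
      neg_one_pow_sub (Finset.card_le_card hsub)]

lemma key {M : Type*} [AddCommGroup M] [Module ℂ M] (E : Finset (Fin n))
    (g : Finset (Fin n) → M) :
    ∑ A ∈ E.powerset, ∑ B ∈ E.powerset, ((-1 : ℂ) ^ (A.card + B.card)) • g (A ∩ B)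
      = ∑ D ∈ E.powerset, ((-1 : ℂ) ^ (E.card + D.card)) • g D := by
  induction E using Finset.induction generalizing g with
  | empty => simp
  | @insert a E' ha ih =>
    have hR : ∑ D ∈ (insert a E').powerset, ((-1 : ℂ) ^ ((insert a E').card + D.card)) • g D
        = ∑ D ∈ E'.powerset, ((-1 : ℂ) ^ (E'.card + D.card)) • (g (insert a D) - g D) := by
      rw [Finset.sum_powerset_insert ha, ← Finset.sum_add_distrib]
      refine Finset.sum_congr rfl fun D hD => ?_
      have haD : a ∉ D := fun h => ha (Finset.mem_powerset.1 hD h)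
      rw [Finset.card_insert_of_notMem ha, Finset.card_insert_of_notMem haD]
      module
    rw [hR, ← ih (fun D => g (insert a D) - g D)]
    rw [Finset.sum_powerset_insert ha, ← Finset.sum_add_distrib]
    refine Finset.sum_congr rfl fun A hA => ?_
    have haA : a ∉ A := fun h => ha (Finset.mem_powerset.1 hA h)
    rw [Finset.sum_powerset_insert ha, Finset.sum_powerset_insert ha]
    rw [← Finset.sum_add_distrib, ← Finset.sum_add_distrib, ← Finset.sum_add_distrib]
    refine Finset.sum_congr rfl fun B hB => ?_
    have haB : a ∉ B := fun h => ha (Finset.mem_powerset.1 hB h)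
    rw [Finset.inter_insert_of_notMem haA, Finset.insert_inter_of_notMem haB,
      ← Finset.insert_inter_distrib,
      Finset.card_insert_of_notMem haA, Finset.card_insert_of_notMem haB]
    module

lemma prodForm (s t : Fin n ≃. Fin n) :
    rookBr s * rookBr t = ∑ A ∈ (domF s).powerset, ((-1 : ℂ) ^ (rookRk s + A.card)) •
      ∑ B ∈ (domF t).powerset, ((-1 : ℂ) ^ (rookRk t + B.card)) •
        MonoidAlgebra.single (restrict (s * t) (B ∩ pre t A)) 1 := by
  rw [br_eq s, br_eq t, Finset.sum_mul]
  refine Finset.sum_congr rfl fun A hA => ?_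
  rw [Finset.mul_sum, Finset.smul_sum]
  refine Finset.sum_congr rfl fun B hB => ?_
  rw [smul_mul_smul_comm, MonoidAlgebra.single_mul_single, one_mul, restrict_mul_restrict,
    smul_smul]
  congr 1
  ring

lemma mem_ranF {t : Fin n ≃. Fin n} {y : Fin n} :
    y ∈ domF t.symm ↔ ∃ x, t x = some y := by
  rw [mem_domF, Option.isSome_iff_exists]
  exact exists_congr fun x => PEquiv.eq_some_iff t

lemma dom_coe (s : Fin n ≃. Fin n) : rookDom s = ↑(domF s) := by
  ext x; simp [rookDom, domF, Option.isSome_iff_ne_none]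

lemma ran_coe (t : Fin n ≃. Fin n) : rookRan t = ↑(domF t.symm) := by
  ext y; simp [rookRan, domF, Option.isSome_iff_ne_none]

lemma t_inj {t : Fin n ≃. Fin n} {x x' y : Fin n}
    (h1 : t x = some y) (h2 : t x' = some y) : x = x' := by
  have e1 := (PEquiv.eq_some_iff t).2 h1
  have e2 := (PEquiv.eq_some_iff t).2 h2
  rw [e1] at e2
  exact Option.some_injective _ e2

lemma pre_insert_eq {t : Fin n ≃. Fin n} {y : Fin n} (hyt : ∀ x, t x ≠ some y)
    (A : Finset (Fin n)) : pre t (insert y A) = pre t A := by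
  ext x
  rw [mem_pre, mem_pre]
  constructor
  · rintro ⟨y', hy', ht'⟩
    rcases Finset.mem_insert.1 hy' with rfl | h
    · exact absurd ht' (hyt x)
    · exact ⟨y', h, ht'⟩
  · rintro ⟨y', hy', ht'⟩
    exact ⟨y', Finset.mem_insert_of_mem hy', ht'⟩

def img (t : Fin n ≃. Fin n) (A' : Finset (Fin n)) : Finset (Fin n) :=
  Finset.univ.filter fun y => ∃ x ∈ A', t x = some y

lemma mem_img {t : Fin n ≃. Fin n} {A' : Finset (Fin n)} {y : Fin n} :
    y ∈ img t A' ↔ ∃ x ∈ A', t x = some y := by simp [img]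

lemma img_pre {t : Fin n ≃. Fin n} {A : Finset (Fin n)}
    (hA : ∀ y ∈ A, ∃ x, t x = some y) : img t (pre t A) = A := by
  ext y
  rw [mem_img]
  constructor
  · rintro ⟨x, hx, hxy⟩
    rcases mem_pre.1 hx with ⟨y', hy', hty'⟩
    rw [hxy] at hty'
    have : y = y' := Option.some_injective _ hty'
    exact this ▸ hy'
  · intro hy
    rcases hA y hy with ⟨x, hx⟩
    exact ⟨x, mem_pre.2 ⟨y, hy, hx⟩, hx⟩

lemma pre_img {t : Fin n ≃. Fin n} {A' : Finset (Fin n)} (hA' : A' ⊆ domF t) :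
    pre t (img t A') = A' := by
  ext x
  rw [mem_pre]
  constructor
  · rintro ⟨y, hy, hxy⟩
    rcases mem_img.1 hy with ⟨x', hx', hx'y⟩
    rwa [t_inj hxy hx'y]
  · intro hx
    rcases Option.isSome_iff_exists.1 (mem_domF.1 (hA' hx)) with ⟨y, hy⟩
    exact ⟨y, mem_img.2 ⟨x, hx, hy⟩, hy⟩

lemma card_pre {t : Fin n ≃. Fin n} {A : Finset (Fin n)}
    (hA : ∀ y ∈ A, ∃ x, t x = some y) : (pre t A).card = A.card := by
  apply Finset.card_bij (fun x hx => Classical.choose (mem_pre.1 hx))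
  · intro x hx
    exact (Classical.choose_spec (mem_pre.1 hx)).1
  · intro x₁ h₁ x₂ h₂ heq
    have s1 := (Classical.choose_spec (mem_pre.1 h₁)).2
    have s2 := (Classical.choose_spec (mem_pre.1 h₂)).2
    rw [heq] at s1
    exact t_inj s1 s2
  · intro y hy
    rcases hA y hy with ⟨x, hxy⟩
    have hx : x ∈ pre t A := mem_pre.2 ⟨y, hy, hxy⟩
    refine ⟨x, hx, ?_⟩
    have s1 := (Classical.choose_spec (mem_pre.1 hx)).2
    exact Option.some_injective _ (s1.symm.trans hxy)

lemma card_ranF (t : Fin n ≃. Fin n) : (domF t.symm).card = (domF t).card := by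
  apply Finset.card_bij (fun y hy => Classical.choose (mem_ranF.1 hy))
  · intro y hy
    have := Classical.choose_spec (mem_ranF.1 hy)
    rw [mem_domF, this]
    rfl
  · intro y₁ h₁ y₂ h₂ heq
    have s1 := Classical.choose_spec (mem_ranF.1 h₁)
    have s2 := Classical.choose_spec (mem_ranF.1 h₂)
    rw [heq, s2] at s1
    exact (Option.some_injective _ s1).symm
  · intro x hx
    rcases Option.isSome_iff_exists.1 (mem_domF.1 hx) with ⟨y, hy⟩
    have hyR : y ∈ domF t.symm := mem_ranF.2 ⟨x, hy⟩
    refine ⟨y, hyR, ?_⟩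
    exact t_inj (Classical.choose_spec (mem_ranF.1 hyR)) hy

lemma sum_powerset_zero {M : Type*} [AddCommGroup M] [Module ℂ M] {E : Finset (Fin n)}
    {y : Fin n} (hy : y ∈ E) (c : ℕ) (G : Finset (Fin n) → M)
    (hG : ∀ A, G (insert y A) = G A) :
    ∑ A ∈ E.powerset, ((-1 : ℂ) ^ (c + A.card)) • G A = 0 := by
  have hpair : ∀ A : Finset (Fin n), y ∉ A →
      ((-1 : ℂ) ^ (c + A.card)) • G A
        + ((-1 : ℂ) ^ (c + (insert y A).card)) • G (insert y A) = 0 := by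
    intro A hyA
    rw [hG, Finset.card_insert_of_notMem hyA,
      show c + (A.card + 1) = (c + A.card) + 1 from by omega, pow_succ]
    module
  refine Finset.sum_involution (fun A _ => if y ∈ A then A.erase y else insert y A)
    ?_ ?_ ?_ ?_
  · intro A _
    by_cases hyA : y ∈ A
    · rw [if_pos hyA, add_comm]
      have h1 := hpair (A.erase y) (Finset.notMem_erase y A)
      rwa [Finset.insert_erase hyA] at h1
    · rw [if_neg hyA]
      exact hpair A hyA
  · intro A _ _
    by_cases hyA : y ∈ A
    · rw [if_pos hyA]
      exact fun h => (Finset.erase_eq_self.mp h) hyA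
    · rw [if_neg hyA]
      exact fun h => hyA (Finset.insert_eq_self.mp h)
  · intro A hA
    rw [Finset.mem_powerset] at hA ⊢
    by_cases hyA : y ∈ A
    · rw [if_pos hyA]
      exact (Finset.erase_subset _ _).trans hA
    · rw [if_neg hyA]
      exact Finset.insert_subset hy hA
  · intro A _
    by_cases hyA : y ∈ A
    · rw [if_pos hyA, if_neg (Finset.notMem_erase y A), Finset.insert_erase hyA]
    · rw [if_neg hyA, if_pos (Finset.mem_insert_self y A), Finset.erase_insert hyA]

end RookAux

open RookAux

/-- Multiplication of groupoid basis elements in `ℂ R_n`: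
`⌊s⌋⌊t⌋ = ⌊st⌋` if `dom s = ran t`, and `⌊s⌋⌊t⌋ = 0` otherwise. -/
theorem rook_monoid_groupoid_basis_mul (n : ℕ) (s t : Fin n ≃. Fin n) :
    (rookDom s = rookRan t → rookBr s * rookBr t = rookBr (s * t)) ∧
    (rookDom s ≠ rookRan t → rookBr s * rookBr t = 0) := by
  constructor
  · intro h
    have hF : domF s = domF t.symm := by
      have h' := h
      rw [dom_coe, ran_coe] at h'
      exact_mod_cast h'
    have hdom : ∀ y ∈ domF s, ∃ x, t x = some y := fun y hy => mem_ranF.1 (hF ▸ hy)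
    have hran : ∀ x y, t x = some y → y ∈ domF s := fun x y hxy => by
      rw [hF]
      exact mem_ranF.2 ⟨x, hxy⟩
    have hEdom : domF (s * t) = domF t := by
      ext x
      rw [mem_domF, mem_domF, mul_apply]
      constructor
      · intro hx
        cases ht : t x with
        | none => rw [ht] at hx; simp at hx
        | some y => rfl
      · intro hx
        rcases Option.isSome_iff_exists.1 hx with ⟨y, hy⟩
        rcases Option.isSome_iff_exists.1 (mem_domF.1 (hran x y hy)) with ⟨z, hz⟩
        simp [hy, hz]
    have hcard : (domF s).card = (domF t).card := by rw [hF, card_ranF]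
    calc rookBr s * rookBr t
        = ∑ A ∈ (domF s).powerset, ((-1 : ℂ) ^ (rookRk s + A.card)) •
            ∑ B ∈ (domF t).powerset, ((-1 : ℂ) ^ (rookRk t + B.card)) •
              MonoidAlgebra.single (restrict (s * t) (B ∩ pre t A)) 1 := prodForm s t
      _ = ∑ A ∈ (domF t).powerset, ∑ B ∈ (domF t).powerset,
            ((-1 : ℂ) ^ (A.card + B.card)) •
              (((-1 : ℂ) ^ (rookRk s + rookRk t)) •
                MonoidAlgebra.single (restrict (s * t) (A ∩ B)) 1) := by
          refine Finset.sum_nbij' (pre t) (img t) ?_ ?_ ?_ ?_ ?_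
          · intro A hA
            rw [Finset.mem_powerset]
            intro x hx
            rcases mem_pre.1 hx with ⟨y, _, hy⟩
            rw [mem_domF, hy]
            rfl
          · intro A' hA'
            rw [Finset.mem_powerset]
            intro y hy
            rcases mem_img.1 hy with ⟨x, _, hxy⟩
            exact hran x y hxy
          · intro A hA
            exact img_pre (fun y hy => hdom y (Finset.mem_powerset.1 hA hy))
          · intro A' hA'
            exact pre_img (Finset.mem_powerset.1 hA')
          · intro A hA
            have hc : (pre t A).card = A.card :=
              card_pre (fun y hy => hdom y (Finset.mem_powerset.1 hA hy))
            rw [Finset.smul_sum]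
            refine Finset.sum_congr rfl fun B hB => ?_
            rw [smul_smul, smul_smul, hc, Finset.inter_comm]
            congr 1
            ring
      _ = ∑ D ∈ (domF t).powerset, ((-1 : ℂ) ^ ((domF t).card + D.card)) •
            (((-1 : ℂ) ^ (rookRk s + rookRk t)) •
              MonoidAlgebra.single (restrict (s * t) D) 1) :=
          key (domF t) (fun D => ((-1 : ℂ) ^ (rookRk s + rookRk t)) •
            MonoidAlgebra.single (restrict (s * t) D) 1)
      _ = rookBr (s * t) := by
          rw [br_eq (s * t)]
          refine Finset.sum_congr (by rw [hEdom]) fun D hD => ?_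
          rw [smul_smul]
          congr 1
          rw [rookRk_eq s, rookRk_eq t, rookRk_eq (s * t), hEdom, hcard]
          have h1 : ((-1 : ℂ)) ^ ((domF t).card + (domF t).card) = 1 := by
            rw [← two_mul, pow_mul]
            norm_num
          rw [h1, mul_one, pow_add]
  · intro hne
    have hF : domF s ≠ domF t.symm := by
      intro h
      exact hne (by rw [dom_coe, ran_coe, h])
    have hwit : ∃ y, (y ∈ domF s ∧ y ∉ domF t.symm) ∨ (y ∈ domF t.symm ∧ y ∉ domF s) := by
      by_contra hc
      push_neg at hc
      apply hF
      ext y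
      have := hc y
      tauto
    rcases hwit with ⟨y, ⟨hyF, hyR⟩ | ⟨hyR, hyF⟩⟩
    · have hyt : ∀ x, t x ≠ some y := fun x hx => hyR (mem_ranF.2 ⟨x, hx⟩)
      rw [prodForm]
      exact sum_powerset_zero hyF (rookRk s)
        (fun A => ∑ B ∈ (domF t).powerset, ((-1 : ℂ) ^ (rookRk t + B.card)) •
          MonoidAlgebra.single (restrict (s * t) (B ∩ pre t A)) (1 : ℂ))
        (fun A => by simp only [pre_insert_eq hyt])
    · rcases mem_ranF.1 hyR with ⟨x, hx⟩
      have hxt : x ∈ domF t := mem_domF.2 (by rw [hx]; rfl)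
      rw [prodForm]
      apply Finset.sum_eq_zero
      intro A hA
      have hxpre : x ∉ pre t A := by
        intro hmem
        rcases mem_pre.1 hmem with ⟨y', hy', hty'⟩
        rw [hx] at hty'
        have : y = y' := Option.some_injective _ hty'
        exact hyF (Finset.mem_powerset.1 hA (this ▸ hy'))
      have hz : ∑ B ∈ (domF t).powerset, ((-1 : ℂ) ^ (rookRk t + B.card)) •
          MonoidAlgebra.single (restrict (s * t) (B ∩ pre t A)) (1 : ℂ) = 0 :=
        sum_powerset_zero hxt (rookRk t)
          (fun B => MonoidAlgebra.single (restrict (s * t) (B ∩ pre t A)) (1 : ℂ))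
          (fun B => by simp only [Finset.insert_inter_of_notMem hxpre])
      rw [hz, smul_zero]
end

section
/- For every s ∈ R_n of rank k, the number of elements x ∈ R_n with x ≥ s (in the restriction order) equals |R_{n−k}|, and the number of elements t ∈ R_n with t ≤ s equals 2^k. -/
open Finset

/-! ### Auxiliary results on `Option.pmap` -/

lemma pmap_eq_some_iff' {α β : Type*} {p : α → Prop} (f : ∀ a, p a → β) {o : Option α}
    {H : ∀ a ∈ o, p a} {b : β} :
    o.pmap f H = some b ↔ ∃ a, ∃ h : o = some a, f a (H a h) = b := by
  cases o with
  | none => simp [Option.pmap]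
  | some a =>
    simp only [Option.pmap, Option.some.injEq]
    constructor
    · intro h; exact ⟨a, rfl, h⟩
    · rintro ⟨a', h', hf⟩
      obtain rfl := h'
      exact hf

lemma pmap_eq_none_iff' {α β : Type*} {p : α → Prop} (f : ∀ a, p a → β) {o : Option α}
    {H : ∀ a ∈ o, p a} :
    o.pmap f H = none ↔ o = none := by
  cases o <;> simp [Option.pmap]

lemma pmap_mk_map_val {α : Type*} {p : α → Prop} (o : Option α) (H : ∀ a ∈ o, p a) :
    (o.pmap (fun a h => (⟨a, h⟩ : {a // p a})) H).map Subtype.val = o := by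
  cases o <;> rfl

/-! ### Counting all partial equivalences between two types -/

section PEquivCount

variable {α β : Type*} [Fintype α] [Fintype β] [DecidableEq α] [DecidableEq β]

omit [Fintype α] [Fintype β] [DecidableEq α] [DecidableEq β] in
lemma sigmaEmb_eq {x y : Σ D : Finset α, ({a // a ∈ D} ↪ β)}
    (h1 : x.1 = y.1)
    (h2 : ∀ a (ha : a ∈ x.1) (hb : a ∈ y.1), x.2 ⟨a, ha⟩ = y.2 ⟨a, hb⟩) : x = y := by
  obtain ⟨D, f⟩ := x
  obtain ⟨E, g⟩ := y
  dsimp at h1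
  subst h1
  exact congrArg _ (by ext ⟨a, ha⟩; exact h2 a ha ha)

omit [Fintype α] [Fintype β] [DecidableEq β] in
lemma sigmaFun_eq_some {p : Σ D : Finset α, ({a // a ∈ D} ↪ β)} {a : α} {b : β}
    (h : (if h : a ∈ p.1 then some (p.2 ⟨a, h⟩) else none) = some b) :
    ∃ ha : a ∈ p.1, p.2 ⟨a, ha⟩ = b := by
  split_ifs at h with h1
  exact ⟨h1, Option.some.inj h⟩

open Classical in
/-- A partial equivalence is the same as a finset together with an embedding. -/
noncomputable def pequivSigma : (α ≃. β) ≃ Σ D : Finset α, ({a // a ∈ D} ↪ β) where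
  toFun u := ⟨Finset.univ.filter fun a => (u a).isSome,
    ⟨fun x => (u x.1).get (Finset.mem_filter.1 x.2).2,
     by
      rintro ⟨a, ha⟩ ⟨a', ha'⟩ h
      replace ha := (Finset.mem_filter.1 ha).2
      replace ha' := (Finset.mem_filter.1 ha').2
      simp only at h
      have h1 : u a = some ((u a).get ha) := (Option.some_get ha).symm
      have h2 : u a' = some ((u a).get ha) := by rw [h]; exact (Option.some_get ha').symm
      have m1 : a ∈ u.symm ((u a).get ha) := (u.mem_iff_mem).2 h1
      have m2 : a' ∈ u.symm ((u a).get ha) := (u.mem_iff_mem).2 h2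
      exact Subtype.ext (Option.mem_unique m1 m2)⟩⟩
  invFun p :=
    { toFun := fun a => if h : a ∈ p.1 then some (p.2 ⟨a, h⟩) else none
      invFun := fun b =>
        if h : ∃ a, (if h' : a ∈ p.1 then some (p.2 ⟨a, h'⟩) else none) = some b then
          some h.choose else none
      inv := by
        intro a b
        constructor
        · intro hab
          by_cases h : ∃ a, (if h' : a ∈ p.1 then some (p.2 ⟨a, h'⟩) else none) = some b
          · rw [dif_pos h] at hab
            obtain ⟨ha, hb⟩ := sigmaFun_eq_some h.choose_spec
            cases Option.some.inj hab
            rw [dif_pos ha, hb]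
          · rw [dif_neg h] at hab
            simp at hab
        · intro hab
          have hex : ∃ a, (if h' : a ∈ p.1 then some (p.2 ⟨a, h'⟩) else none) = some b :=
            ⟨a, hab⟩
          rw [dif_pos hex]
          congr 1
          obtain ⟨hc, hcb⟩ := sigmaFun_eq_some hex.choose_spec
          obtain ⟨ha, hb⟩ := sigmaFun_eq_some hab
          have := p.2.injective (a₁ := ⟨hex.choose, hc⟩) (a₂ := ⟨a, ha⟩)
            (by rw [hcb, hb])
          exact congrArg Subtype.val this }
  left_inv u := by
    ext a b
    simp only [PEquiv.coe_mk_apply, mem_filter, mem_univ, true_and]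
    split_ifs with h
    · simp [Option.some_get]
      show (u a).get h = b ↔ u a = some b
      rw [Option.eq_some_iff_get_eq]; exact ⟨fun e => ⟨h, e⟩, fun ⟨_, e⟩ => e⟩
    · simp only [Option.not_isSome_iff_eq_none] at h
      simp [h]
  right_inv p := by
    apply sigmaEmb_eq
    · ext a
      simp only [mem_filter, mem_univ, true_and, PEquiv.coe_mk_apply]
      split_ifs with h <;> simp [h]
    · intro a ha hb
      show (if h : a ∈ p.1 then some (p.2 ⟨a, h⟩) else none).get _ = p.2 ⟨a, hb⟩
      simp [dif_pos hb]

theorem card_pequiv_s13 (m : ℕ) (hα : Fintype.card α = m) (hβ : Fintype.card β = m) :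
    Nat.card (α ≃. β) = ∑ j ∈ Finset.range (m + 1), (m.choose j) ^ 2 * j.factorial := by
  rw [Nat.card_congr pequivSigma, Nat.card_eq_fintype_card, Fintype.card_sigma]
  have : ∀ D : Finset α, Fintype.card ({a // a ∈ D} ↪ β) = m.descFactorial D.card := by
    intro D
    rw [Fintype.card_embedding_eq, Fintype.card_coe, hβ]
  simp_rw [this]
  rw [← Finset.powerset_univ, Finset.sum_powerset]
  rw [Finset.card_univ, hα]
  refine Finset.sum_congr rfl fun j hj => ?_
  have : ∀ D ∈ Finset.powersetCard j (univ : Finset α),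
      m.descFactorial D.card = m.descFactorial j := fun D hD => by
    rw [(Finset.mem_powersetCard.1 hD).2]
  rw [Finset.sum_congr rfl this, Finset.sum_const, Finset.card_powersetCard, Finset.card_univ, hα,
    smul_eq_mul, Nat.descFactorial_eq_factorial_mul_choose, pow_two]
  ring

end PEquivCount

/-! ### The lower interval -/

section Down

variable {n : ℕ} (s : Fin n ≃. Fin n)

/-- Restriction of `s` to a predicate. -/
def restr (p : Fin n → Prop) [DecidablePred p] : Fin n ≃. Fin n where
  toFun x := if p x then s x else none
  invFun y := (s.symm y).bind (fun a => if p a then some a else none)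
  inv a b := by
    simp only [Option.mem_def, Option.bind_eq_some_iff]
    constructor
    · rintro ⟨a', ha', h⟩
      split_ifs at h with hp
      obtain rfl := Option.some.inj h
      have : s a' = some b := (s.mem_iff_mem).1 ha'
      simp [hp, this]
    · intro h
      split_ifs at h with hp
      exact ⟨a, (s.mem_iff_mem).2 h, by simp [hp]⟩

lemma restr_le (p : Fin n → Prop) [DecidablePred p] : rookLe (restr s p) s := by
  intro x
  show (if p x then s x else none) = none ∨ (if p x then s x else none) = s x
  split_ifs <;> simp

open Classical in
/-- Restrictions of `s` correspond to subsets of the domain of `s`. -/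
noncomputable def downEquiv : {t : Fin n ≃. Fin n // rookLe t s} ≃
    ({x : Fin n // (s x).isSome} → Bool) where
  toFun t x := (t.1 x.1).isSome
  invFun f := ⟨restr s (fun x => ∃ h : (s x).isSome, f ⟨x, h⟩), restr_le s _⟩
  left_inv := by
    rintro ⟨t, ht⟩
    apply Subtype.ext
    apply PEquiv.ext
    intro a
    show (if ∃ h : (s a).isSome, ((t a).isSome : Bool) = true then s a else none) = t a
    rcases ht a with h | h
    · rw [h, if_neg]
      rintro ⟨h1, h2⟩
      simp at h2
    · by_cases hn : t a = none
      · rw [hn, if_neg]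
        rintro ⟨h1, h2⟩
        simp at h2
      · have hsome : (t a).isSome := Option.isSome_iff_ne_none.2 hn
        rw [if_pos ⟨h ▸ hsome, hsome⟩, h]
  right_inv := by
    intro f
    funext ⟨a, ha⟩
    show ((if ∃ h : (s a).isSome, (f ⟨a, h⟩ : Bool) = true then s a else none).isSome : Bool)
        = f ⟨a, ha⟩
    by_cases hf : f ⟨a, ha⟩ = true
    · rw [if_pos ⟨ha, hf⟩, ha, hf]
    · rw [if_neg, Option.isSome_none, eq_comm]
      · simpa using hf
      · rintro ⟨h1, h2⟩
        exact hf h2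

end Down

/-! ### The upper interval -/

section Up

variable {n : ℕ} {s x : Fin n ≃. Fin n}

lemma rookLe_symm (h : rookLe s x) : rookLe s.symm x.symm := by
  intro b
  cases hsb : s.symm b with
  | none => exact Or.inl rfl
  | some a =>
    right
    have hsa : s a = some b := (s.mem_iff_mem).1 hsb
    rcases h a with h' | h'
    · rw [h'] at hsa; simp at hsa
    · have hxa : x a = some b := h' ▸ hsa
      exact ((x.mem_iff_mem).2 hxa).symm

lemma extend_none (hx : rookLe s x) {a b : Fin n} (hsa : s a = none)
    (hxa : x a = some b) : s.symm b = none := by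
  cases hsb : s.symm b with
  | none => rfl
  | some a' =>
    exfalso
    have hsa' : s a' = some b := (s.mem_iff_mem).1 hsb
    rcases hx a' with h | h
    · rw [h] at hsa'; simp at hsa'
    · have hxa' : x a' = some b := h ▸ hsa'
      have heq : a' = a := by
        have m1 : a' ∈ x.symm b := (x.mem_iff_mem).2 hxa'
        have m2 : a ∈ x.symm b := (x.mem_iff_mem).2 hxa
        exact Option.mem_unique m1 m2
      rw [heq, hsa] at hsa'
      simp at hsa'

lemma extend_none' (hx : rookLe s x) {a b : Fin n} (hsb : s.symm b = none)
    (hxb : x.symm b = some a) : s a = none := by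
  have := extend_none (rookLe_symm hx) hsb hxb
  simpa using this

end Up

section UpEquiv

variable {n : ℕ} (s : Fin n ≃. Fin n)

/-- Extensions of `s` correspond to partial bijections between the complement of the
domain and the complement of the range. -/
noncomputable def upEquiv : {x : Fin n ≃. Fin n // rookLe s x} ≃
    ({a : Fin n // s a = none} ≃. {b : Fin n // s.symm b = none}) where
  toFun x :=
    { toFun := fun a => (x.1 a.1).pmap (fun b hb => ⟨b, hb⟩)
        (fun b hb => extend_none x.2 a.2 hb)
      invFun := fun b => (x.1.symm b.1).pmap (fun a ha => ⟨a, ha⟩)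
        (fun a ha => extend_none' x.2 b.2 ha)
      inv := by
        rintro ⟨a, ha⟩ ⟨b, hb⟩
        simp only [Option.mem_def, pmap_eq_some_iff']
        constructor
        · rintro ⟨a0, h0, he⟩
          obtain rfl : a0 = a := congrArg Subtype.val he
          exact ⟨b, (x.1.mem_iff_mem).1 h0, rfl⟩
        · rintro ⟨b0, h0, he⟩
          obtain rfl : b0 = b := congrArg Subtype.val he
          exact ⟨a, (x.1.mem_iff_mem).2 h0, rfl⟩ }
  invFun u :=
    ⟨{ toFun := fun a => if h : s a = none then (u ⟨a, h⟩).map Subtype.val else s a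
       invFun := fun b => if h : s.symm b = none then (u.symm ⟨b, h⟩).map Subtype.val
         else s.symm b
       inv := by
        intro a b
        by_cases ha : s a = none <;> by_cases hb : s.symm b = none
        · rw [dif_pos ha, dif_pos hb]
          simp only [Option.map_eq_some_iff]
          constructor
          · rintro ⟨⟨a0, ha0⟩, hu, rfl⟩
            exact ⟨⟨b, hb⟩, (u.mem_iff_mem).1 hu, rfl⟩
          · rintro ⟨⟨b0, hb0⟩, hu, rfl⟩
            exact ⟨⟨a, ha⟩, (u.mem_iff_mem).2 hu, rfl⟩
        · rw [dif_pos ha, dif_neg hb]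
          simp only [Option.map_eq_some_iff]
          constructor
          · intro h
            have : s a = some b := (s.mem_iff_mem).1 h
            rw [ha] at this; simp at this
          · rintro ⟨⟨b0, hb0⟩, hu, rfl⟩
            exact absurd hb0 hb
        · rw [dif_neg ha, dif_pos hb]
          simp only [Option.map_eq_some_iff]
          constructor
          · rintro ⟨⟨a0, ha0⟩, hu, rfl⟩
            exact absurd ha0 ha
          · intro h
            have : s.symm b = some a := (s.mem_iff_mem).2 h
            rw [hb] at this; simp at this
        · rw [dif_neg ha, dif_neg hb]
          exact s.inv a b },
     fun a => by
      by_cases h : s a = none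
      · exact Or.inl h
      · exact Or.inr (by simp [dif_neg h])⟩
  left_inv := by
    rintro ⟨x, hx⟩
    apply Subtype.ext
    apply PEquiv.ext
    intro a
    simp only [PEquiv.coe_mk_apply]
    by_cases h : s a = none
    · rw [dif_pos h]
      exact pmap_mk_map_val _ _
    · rw [dif_neg h]
      rcases hx a with h' | h'
      · exact absurd h' h
      · exact h'
  right_inv := by
    intro u
    apply PEquiv.ext
    rintro ⟨a, ha⟩
    simp only [PEquiv.coe_mk_apply]
    cases hu : u ⟨a, ha⟩ with
    | none =>
      rw [pmap_eq_none_iff']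
      rw [dif_pos ha, hu]
      rfl
    | some b =>
      rw [pmap_eq_some_iff']
      refine ⟨b.1, ?_, Subtype.ext rfl⟩
      rw [dif_pos ha, hu]
      rfl

end UpEquiv

/-! ### Cardinality lemmas -/

section Cards

variable {n : ℕ} (s : Fin n ≃. Fin n)

/-- The domain and the range of a partial permutation are in bijection. -/
def domRanEquiv : {a : Fin n // (s a).isSome} ≃ {b : Fin n // (s.symm b).isSome} where
  toFun a := ⟨(s a.1).get a.2, by
    have : a.1 ∈ s.symm ((s a.1).get a.2) := (s.mem_iff_mem).2 (Option.get_mem a.2)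
    exact Option.isSome_iff_exists.2 ⟨a.1, this⟩⟩
  invFun b := ⟨(s.symm b.1).get b.2, by
    have : b.1 ∈ s ((s.symm b.1).get b.2) := (s.mem_iff_mem).1 (Option.get_mem b.2)
    exact Option.isSome_iff_exists.2 ⟨b.1, this⟩⟩
  left_inv a := Subtype.ext (by
    apply Option.get_of_mem
    exact (s.mem_iff_mem).2 (Option.get_mem a.2))
  right_inv b := Subtype.ext (by
    apply Option.get_of_mem
    exact (s.mem_iff_mem).1 (Option.get_mem b.2))

lemma rk_card : rookRk s = Fintype.card {a : Fin n // (s a).isSome} :=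
  (Fintype.card_subtype _).symm

lemma rk_symm : rookRk s.symm = rookRk s := by
  rw [rk_card, rk_card, Fintype.card_congr (domRanEquiv s)]

lemma card_none : Fintype.card {a : Fin n // s a = none} = n - rookRk s := by
  rw [Fintype.card_subtype]
  have h1 : (univ.filter fun a : Fin n => s a = none)
      = univ.filter fun a : Fin n => ¬ (s a).isSome :=
    Finset.filter_congr (fun a _ => by simp [Option.not_isSome_iff_eq_none])
  rw [h1, Finset.filter_not, Finset.card_sdiff_of_subset (Finset.filter_subset _ _),
    Finset.card_univ, Fintype.card_fin]
  rfl

end Cards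

/-- For `s ∈ R_n` of rank `k`, the number of `x ≥ s` in the restriction order is
`|R_{n-k}| = ∑_j ((n-k) choose j)² j!`, and the number of `t ≤ s` is `2^k`. -/
theorem rook_monoid_interval_counts (n : ℕ) (s : Fin n ≃. Fin n) (k : ℕ)
    (hk : rookRk s = k) :
    Nat.card {x : Fin n ≃. Fin n // rookLe s x} =
        ∑ j ∈ Finset.range (n - k + 1), ((n - k).choose j) ^ 2 * j.factorial ∧
    Nat.card {t : Fin n ≃. Fin n // rookLe t s} = 2 ^ k := by
  constructor
  · rw [Nat.card_congr (upEquiv s)]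
    exact card_pequiv_s13 (n - k) (by rw [card_none, hk]) (by rw [card_none, rk_symm, hk])
  · rw [Nat.card_congr (downEquiv s), Nat.card_eq_fintype_card, Fintype.card_fun,
      Fintype.card_bool, Fintype.card_subtype]
    rw [show (Finset.univ.filter fun x => (s x).isSome).card = k from hk]
end

section
/- The identity Σ_{k=0}^n (n choose k)² k! |R_{n−k}| = Σ_{k=0}^n (n choose k)² k! 2^k holds, where |R_m| = Σ_{j=0}^m (m choose j)² j!. -/
open Finset

private lemma rook_key {n m k : ℕ} (hkm : k ≤ m) (hmn : m ≤ n) :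
    (n.choose k) ^ 2 * k.factorial * (((n - k).choose (m - k)) ^ 2 * (m - k).factorial) =
      (n.choose m) ^ 2 * m.factorial * m.choose k := by
  have h1 : n.choose m * m.choose k = n.choose k * (n - k).choose (m - k) :=
    Nat.choose_mul hkm
  have h2 : m.choose k * k.factorial * (m - k).factorial = m.factorial :=
    Nat.choose_mul_factorial_mul_factorial hkm
  calc (n.choose k) ^ 2 * k.factorial * (((n - k).choose (m - k)) ^ 2 * (m - k).factorial)
      = (n.choose k * (n - k).choose (m - k)) ^ 2 * (k.factorial * (m - k).factorial) := by
        ring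
    _ = (n.choose m * m.choose k) ^ 2 * (k.factorial * (m - k).factorial) := by rw [h1]
    _ = (n.choose m) ^ 2 * (m.choose k * k.factorial * (m - k).factorial) * m.choose k := by
        ring
    _ = (n.choose m) ^ 2 * m.factorial * m.choose k := by rw [h2]

/-- Double-counting the zeta matrix of the rook monoid:
`∑_{k=0}^n (n choose k)² k! |R_{n−k}| = ∑_{k=0}^n (n choose k)² k! 2^k`, where
`|R_m| = ∑_{j=0}^m (m choose j)² j!`. -/
theorem rook_monoid_zeta_double_count (n : ℕ) :
    ∑ k ∈ Finset.range (n + 1),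
        (n.choose k) ^ 2 * k.factorial *
          (∑ j ∈ Finset.range (n - k + 1), ((n - k).choose j) ^ 2 * j.factorial) =
      ∑ k ∈ Finset.range (n + 1), (n.choose k) ^ 2 * k.factorial * 2 ^ k := by
  have L : (∑ k ∈ Finset.range (n + 1),
        (n.choose k) ^ 2 * k.factorial *
          (∑ j ∈ Finset.range (n - k + 1), ((n - k).choose j) ^ 2 * j.factorial)) =
      ∑ k ∈ Finset.range (n + 1), ∑ j ∈ Finset.range (n - k + 1),
        (n.choose (k + j)) ^ 2 * (k + j).factorial * ((k + j).choose k) := by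
    refine Finset.sum_congr rfl fun k hk => ?_
    rw [Finset.mul_sum]
    refine Finset.sum_congr rfl fun j hj => ?_
    have hk' : k ≤ n := Nat.lt_succ_iff.mp (Finset.mem_range.mp hk)
    have hj' : j ≤ n - k := Nat.lt_succ_iff.mp (Finset.mem_range.mp hj)
    have hmn : k + j ≤ n := by omega
    have hkm : k ≤ k + j := Nat.le_add_right k j
    have := rook_key hkm hmn
    simpa [Nat.add_sub_cancel_left] using this
  have R : (∑ k ∈ Finset.range (n + 1), (n.choose k) ^ 2 * k.factorial * 2 ^ k) =
      ∑ m ∈ Finset.range (n + 1), ∑ k ∈ Finset.range (m + 1),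
        (n.choose m) ^ 2 * m.factorial * (m.choose k) := by
    refine Finset.sum_congr rfl fun m _ => ?_
    rw [← Finset.mul_sum, Nat.sum_range_choose]
  rw [L, R]
  rw [Finset.sum_sigma', Finset.sum_sigma']
  refine Finset.sum_nbij' (fun p => ⟨p.1 + p.2, p.1⟩) (fun p => ⟨p.2, p.1 - p.2⟩)
    ?_ ?_ ?_ ?_ ?_
  · rintro ⟨k, j⟩ hp
    simp only [Finset.mem_sigma, Finset.mem_range] at hp ⊢
    omega
  · rintro ⟨m, k⟩ hp
    simp only [Finset.mem_sigma, Finset.mem_range] at hp ⊢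
    omega
  · rintro ⟨k, j⟩ hp
    simp
  · rintro ⟨m, k⟩ hp
    simp only [Finset.mem_sigma, Finset.mem_range] at hp
    simp only [Sigma.mk.inj_iff]
    constructor
    · omega
    · exact heq_of_eq rfl
  · rintro ⟨k, j⟩ hp
    rfl
end

section
/- Fix n ≥ 3. Every element of R_n is of exactly one of three types: (1) n ∈ dom(s); (2) n ∈ ran(s) but n ∉ dom(s); (3) n ∉ dom(s) and n ∉ ran(s). Consequently R_n is the disjoint union of the sets {T_i s : s ∈ R_{n−1}} for 1 ≤ i ≤ n, the sets {s T^i : s ∈ R_{n−1}, n−1 ∉ dom(s)} for 1 ≤ i ≤ n−1, and {[n]·s : s ∈ R_{n−1}}, where T_i = t_{i+1}t_{i+2}···t_n, T^i = t_n t_{n−1}···t_{i+1} with t_j the transposition (j−1, j), and [n] is the partial identity on {1,...,n−1}. -/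
/-- The adjacent transposition `t_j = (j−1, j)` of `{1,...,n}` (as a permutation of
`Fin n`, entries written `1`-based), for `2 ≤ j ≤ n`; the identity otherwise. -/
def tswap (n j : ℕ) : Equiv.Perm (Fin n) :=
  if h : 2 ≤ j ∧ j ≤ n then
    Equiv.swap ⟨j - 2, by omega⟩ ⟨j - 1, by omega⟩
  else 1

/-- The coset representative `T_i = t_{i+1} t_{i+2} ⋯ t_n`. -/
def Tlow (n i : ℕ) : Equiv.Perm (Fin n) :=
  ((List.range' (i + 1) (n - i)).map (tswap n)).prod

/-- The coset representative `T^i = t_n t_{n−1} ⋯ t_{i+1}`. -/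
def Tup (n i : ℕ) : Equiv.Perm (Fin n) :=
  ((List.range' (i + 1) (n - i)).reverse.map (tswap n)).prod

lemma Tlow_last (n : ℕ) : Tlow n n = 1 := by
  simp [Tlow]

lemma Tlow_succ (n j : ℕ) (h : j < n) : Tlow n j = tswap n (j+1) * Tlow n (j+1) := by
  unfold Tlow
  have h1 : n - j = (n - (j+1)) + 1 := by omega
  rw [h1, List.range'_succ, List.map_cons, List.prod_cons]

lemma tswap_eq (n j : ℕ) (h1 : 2 ≤ j) (h2 : j ≤ n) :
    tswap n j = Equiv.swap ⟨j - 2, by omega⟩ ⟨j - 1, by omega⟩ := by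
  rw [tswap, dif_pos ⟨h1, h2⟩]

set_option maxHeartbeats 1000000 in
lemma Tlow_spec (n : ℕ) : ∀ k j (hjk : j + k = n) (hj1 : 1 ≤ j),
    (∀ x : Fin n, (x:ℕ) < j - 1 → Tlow n j x = x) ∧
    (∀ x : Fin n, ∀ (h1 : j - 1 ≤ (x:ℕ)) (h2 : (x:ℕ) + 2 ≤ n),
      Tlow n j x = ⟨(x:ℕ)+1, by omega⟩) ∧
    Tlow n j ⟨n-1, by omega⟩ = ⟨j-1, by omega⟩ := by
  intro k
  induction k with
  | zero =>
    intro j hj h1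
    have : j = n := by omega
    subst this
    rw [Tlow_last _]
    refine ⟨fun x hx => rfl, fun x hx hx2 => by omega, by simp⟩
  | succ k ih =>
    intro j hj h1
    have hlt : j < n := by omega
    obtain ⟨ih1, ih2, ih3⟩ := ih (j+1) (by omega) (by omega)
    have hts : tswap n (j+1) = Equiv.swap ⟨j - 1, by omega⟩ ⟨j, by omega⟩ := by
      rw [tswap_eq n (j+1) (by omega) (by omega)]
      congr 1 <;> · ext; simp; omega
    rw [Tlow_succ n j hlt]
    refine ⟨fun x hx => ?_, fun x hx hx2 => ?_, ?_⟩
    · rw [Equiv.Perm.mul_apply, ih1 x (by omega), hts]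
      rw [Equiv.swap_apply_of_ne_of_ne]
      · intro hc; apply_fun (Fin.val) at hc; simp at hc; omega
      · intro hc; apply_fun (Fin.val) at hc; simp at hc; omega
    · rw [Equiv.Perm.mul_apply]
      rcases Nat.eq_or_lt_of_le hx with heq | hlt2
      · have hxeq : x = (⟨j-1, by omega⟩ : Fin n) := Fin.ext (by simpa using heq.symm)
        rw [ih1 x (by omega), hts]
        conv_lhs => rw [hxeq]
        rw [Equiv.swap_apply_left]
        apply Fin.ext; simp; omega
      · rw [ih2 x (by omega) hx2, hts, Equiv.swap_apply_of_ne_of_ne]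
        · intro hc; apply_fun (Fin.val) at hc; simp at hc; omega
        · intro hc; apply_fun (Fin.val) at hc; simp at hc; omega
    · rw [Equiv.Perm.mul_apply, ih3, hts]
      have h4 : (⟨j+1-1, by omega⟩ : Fin n) = ⟨j, by omega⟩ := by
        rw [Fin.mk_eq_mk]; omega
      rw [h4, Equiv.swap_apply_right]

lemma tswap_sq (n j : ℕ) : tswap n j * tswap n j = 1 := by
  unfold tswap
  split
  · exact Equiv.swap_mul_self _ _
  · simp

lemma Tup_eq (n i : ℕ) : Tup n i = (Tlow n i)⁻¹ := by
  unfold Tup Tlow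
  generalize List.range' (i+1) (n-i) = l
  induction l with
  | nil => simp
  | cons a t ih =>
    simp only [List.map_cons, List.reverse_cons, List.map_append, List.prod_append,
      List.prod_cons, List.prod_nil, mul_one, mul_inv_rev, List.map_reverse] at *
    rw [ih]
    congr 1
    rw [eq_inv_iff_mul_eq_one]
    simp only [List.map_nil, List.prod_nil, mul_one]
    exact tswap_sq n a

lemma Tlow_top (n v : ℕ) (hv : v < n) : Tlow n (v+1) ⟨n-1, by omega⟩ = ⟨v, hv⟩ := by
  have := (Tlow_spec n (n-(v+1)) (v+1) (by omega) (by omega)).2.2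
  rw [this]
  exact Fin.ext (by simp)

lemma Tlow_pred (n i : ℕ) (hn : 2 ≤ n) (hi : i ≤ n-2) :
    Tlow n (i+1) ⟨n-2, by omega⟩ = ⟨n-1, by omega⟩ := by
  have := (Tlow_spec n (n-(i+1)) (i+1) (by omega) (by omega)).2.1 ⟨n-2, by omega⟩
    (by simp; omega) (by simp; omega)
  rw [this]
  exact Fin.ext (by simp; omega)

lemma Tup_top (n v : ℕ) (hv : v < n) : Tup n (v+1) ⟨v, hv⟩ = ⟨n-1, by omega⟩ := by
  rw [Tup_eq, Equiv.Perm.inv_eq_iff_eq, Tlow_top]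

lemma Tup_pred (n i : ℕ) (hn : 2 ≤ n) (hi : i ≤ n-2) :
    Tup n (i+1) ⟨n-1, by omega⟩ = ⟨n-2, by omega⟩ := by
  rw [Tup_eq, Equiv.Perm.inv_eq_iff_eq, Tlow_pred n i hn hi]

lemma trans_apply' {α β γ : Type*} (f : α ≃. β) (g : β ≃. γ) (a : α) :
    (f.trans g) a = (f a).bind g := rfl

/-- The link `[n]`: the partial identity defined on `{1,...,n−1}` and undefined at
`n`. -/
def linkP (n : ℕ) : Fin n ≃. Fin n :=
  PEquiv.ofSet {x : Fin n | (x : ℕ) < n - 1}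

lemma linkP_apply (n : ℕ) (x : Fin n) :
    linkP n x = if (x : ℕ) < n - 1 then some x else none := rfl

lemma linkP_ne_top (n : ℕ) (hn : 1 ≤ n) (x y : Fin n) (h : linkP n x = some y) :
    (y : ℕ) < n - 1 := by
  rw [linkP_apply] at h
  split at h
  · cases h; omega
  · cases h

/-- For `n ≥ 3`: every `σ ∈ R_n` is of exactly one of three types (`n ∈ dom σ`;
`n ∈ ran σ` but `n ∉ dom σ`; `n ∉ dom σ` and `n ∉ ran σ`), and consequently `R_n` is
the disjoint union of the sets `{T_i ∘ s : s ∈ R_{n−1}}` for `1 ≤ i ≤ n`, the sets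
`{s ∘ T^i : s ∈ R_{n−1}, n−1 ∉ dom s}` for `1 ≤ i ≤ n−1`, and `{[n] ∘ s : s ∈ R_{n−1}}`,
where `R_{n−1} = {σ : σ(j) = j for j > n−1}`. -/
theorem rook_monoid_three_types (n : ℕ) (hn : 3 ≤ n) :
    let top : Fin n := ⟨n - 1, by omega⟩
    let Rsub : Set (Fin n ≃. Fin n) := {s | ∀ x : Fin n, n - 1 ≤ (x : ℕ) → s x = some x}
    let F : (Fin n ⊕ (Fin (n - 1) ⊕ Unit)) → Set (Fin n ≃. Fin n) :=
      Sum.elim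
        (fun i => (fun s : Fin n ≃. Fin n => s.trans (Tlow n ((i : ℕ) + 1)).toPEquiv) '' Rsub)
        (Sum.elim
          (fun i => (fun s : Fin n ≃. Fin n => (Tup n ((i : ℕ) + 1)).toPEquiv.trans s) ''
            {s | s ∈ Rsub ∧ s ⟨n - 2, by omega⟩ = none})
          (fun _ => (fun s : Fin n ≃. Fin n => s.trans (linkP n)) '' Rsub))
    (∀ s : Fin n ≃. Fin n,
      (s top ≠ none ∧ ¬(s.symm top ≠ none ∧ s top = none) ∧
          ¬(s top = none ∧ s.symm top = none)) ∨
      ((s.symm top ≠ none ∧ s top = none) ∧ ¬(s top ≠ none) ∧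
          ¬(s top = none ∧ s.symm top = none)) ∨
      ((s top = none ∧ s.symm top = none) ∧ ¬(s top ≠ none) ∧
          ¬(s.symm top ≠ none ∧ s top = none))) ∧
    Pairwise (Function.onFun Disjoint F) ∧ (⋃ j, F j) = Set.univ := by
  intro top Rsub F
  -- basic facts
  have htopval : (top : ℕ) = n - 1 := rfl
  have hRsub_top : ∀ s : Fin n ≃. Fin n, s ∈ Rsub → s top = some top := by
    intro s hs; exact hs top (by rw [htopval])
  have hRsub_of_top : ∀ s : Fin n ≃. Fin n, s top = some top → s ∈ Rsub := by
    intro s hs x hx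
    have : x = top := Fin.ext (by omega)
    rw [this]; exact hs
  -- characterizations
  have hmem1 : ∀ (i : Fin n) (σ : Fin n ≃. Fin n), σ ∈ F (Sum.inl i) →
      σ top = some ⟨(i : ℕ), i.2⟩ := by
    intro i σ hσ
    obtain ⟨s, hs, rfl⟩ := hσ
    rw [trans_apply', hRsub_top s hs, Option.bind_some, Equiv.toPEquiv_apply]
    have : (top : Fin n) = ⟨n-1, by omega⟩ := rfl
    rw [this, Tlow_top n i (i.2)]
  have hmem2 : ∀ (i : Fin (n-1)) (σ : Fin n ≃. Fin n), σ ∈ F (Sum.inr (Sum.inl i)) →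
      σ top = none ∧ σ.symm top = some ⟨(i : ℕ), by omega⟩ := by
    intro i σ hσ
    obtain ⟨s, ⟨hs, hs2⟩, rfl⟩ := hσ
    constructor
    · rw [trans_apply', Equiv.toPEquiv_apply, Option.bind_some]
      have : Tup n ((i:ℕ)+1) top = ⟨n-2, by omega⟩ := by
        have : (top : Fin n) = ⟨n-1, by omega⟩ := rfl
        rw [this, Tup_pred n i (by omega) (by omega)]
      rw [this, hs2]
    · rw [PEquiv.eq_some_iff, trans_apply', Equiv.toPEquiv_apply, Option.bind_some]
      have : Tup n ((i:ℕ)+1) ⟨(i:ℕ), by omega⟩ = top := by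
        rw [Tup_top n i (by omega)]
      rw [this, hRsub_top s hs]
  have hmem3 : ∀ (σ : Fin n ≃. Fin n), σ ∈ F (Sum.inr (Sum.inr ())) →
      σ top = none ∧ σ.symm top = none := by
    intro σ hσ
    obtain ⟨s, hs, rfl⟩ := hσ
    constructor
    · rw [trans_apply', hRsub_top s hs, Option.bind_some, linkP_apply, if_neg (by omega)]
    · rw [Option.eq_none_iff_forall_not_mem]
      intro w hw
      rw [Option.mem_def, PEquiv.eq_some_iff, trans_apply'] at hw
      rcases hb : s w with _ | b
      · rw [hb] at hw; cases hw
      · rw [hb, Option.bind_some] at hw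
        have := linkP_ne_top n (by omega) b top hw
        omega
  refine ⟨?_, ?_, ?_⟩
  · intro s
    by_cases h1 : s top = none <;> by_cases h2 : s.symm top = none <;> tauto
  · intro j j' hne
    rw [Function.onFun]
    rw [Set.disjoint_left]
    intro σ hσ hσ'
    match j, j' with
    | Sum.inl i, Sum.inl i' =>
      have e1 := hmem1 i σ hσ
      have e2 := hmem1 i' σ hσ'
      rw [e1] at e2
      have : i = i' := Fin.ext (by simpa using congrArg Fin.val (Option.some.inj e2))
      exact hne (by rw [this])
    | Sum.inl i, Sum.inr (Sum.inl i') =>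
      have e1 := hmem1 i σ hσ
      have e2 := (hmem2 i' σ hσ').1
      rw [e1] at e2; cases e2
    | Sum.inl i, Sum.inr (Sum.inr u) =>
      have e1 := hmem1 i σ hσ
      have e2 := (hmem3 σ (by cases u; exact hσ')).1
      rw [e1] at e2; cases e2
    | Sum.inr (Sum.inl i), Sum.inl i' =>
      have e1 := hmem1 i' σ hσ'
      have e2 := (hmem2 i σ hσ).1
      rw [e1] at e2; cases e2
    | Sum.inr (Sum.inl i), Sum.inr (Sum.inl i') =>
      have e1 := (hmem2 i σ hσ).2
      have e2 := (hmem2 i' σ hσ').2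
      rw [e1] at e2
      have : i = i' := Fin.ext (by simpa using congrArg Fin.val (Option.some.inj e2))
      exact hne (by rw [this])
    | Sum.inr (Sum.inl i), Sum.inr (Sum.inr u) =>
      have e1 := (hmem2 i σ hσ).2
      have e2 := (hmem3 σ (by cases u; exact hσ')).2
      rw [e1] at e2; cases e2
    | Sum.inr (Sum.inr u), Sum.inl i' =>
      have e1 := hmem1 i' σ hσ'
      have e2 := (hmem3 σ (by cases u; exact hσ)).1
      rw [e1] at e2; cases e2
    | Sum.inr (Sum.inr u), Sum.inr (Sum.inl i') =>
      have e1 := (hmem2 i' σ hσ').2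
      have e2 := (hmem3 σ (by cases u; exact hσ)).2
      rw [e1] at e2; cases e2
    | Sum.inr (Sum.inr u), Sum.inr (Sum.inr u') =>
      exact hne (by cases u; cases u'; rfl)
  · rw [Set.eq_univ_iff_forall]
    intro σ
    rw [Set.mem_iUnion]
    rcases h1 : σ top with _ | v
    · rcases h2 : σ.symm top with _ | w
      · -- type 3
        refine ⟨Sum.inr (Sum.inr ()), ?_⟩
        refine ⟨⟨fun x => if x = top then some top else σ x,
                 fun y => if y = top then some top else σ.symm y, ?_⟩, ?_, ?_⟩
        · intro a b
          by_cases ha : a = top <;> by_cases hb : b = top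
          · subst ha; subst hb; simp
          · subst ha
            rw [if_neg hb, if_pos rfl]
            constructor
            · intro hc; rw [σ.eq_some_iff, h1] at hc; cases hc
            · intro hc; exact absurd (Option.some.inj hc).symm hb
          · subst hb
            rw [if_pos rfl, if_neg ha]
            constructor
            · intro hc; exact absurd (Option.some.inj hc).symm ha
            · intro hc; rw [← σ.eq_some_iff, h2] at hc; cases hc
          · rw [if_neg hb, if_neg ha]
            exact σ.eq_some_iff
        · apply hRsub_of_top
          simp
        · apply PEquiv.ext
          intro x
          rw [trans_apply']
          simp only [PEquiv.coe_mk]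
          by_cases hx : x = top
          · rw [if_pos hx, Option.bind_some, linkP_apply, if_neg (by omega), hx, h1]
          · rw [if_neg hx]
            rcases hv : σ x with _ | v
            · rw [Option.bind_none]
            · have hvt : (v : ℕ) < n - 1 := by
                by_contra hc
                have hveq : v = top := Fin.ext (by omega)
                rw [hveq] at hv
                rw [← σ.eq_some_iff] at hv
                rw [h2] at hv; cases hv
              rw [Option.bind_some, linkP_apply, if_pos hvt]
      · -- type 2
        have hw : (w : ℕ) < n - 1 := by
          by_contra hc
          have hwt : w = top := Fin.ext (by omega)
          rw [hwt] at h2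
          rw [PEquiv.eq_some_iff] at h2
          rw [h1] at h2; cases h2
        refine ⟨Sum.inr (Sum.inl ⟨(w:ℕ), hw⟩), ?_⟩
        refine ⟨(Tlow n ((w:ℕ)+1)).toPEquiv.trans σ, ⟨?_, ?_⟩, ?_⟩
        · apply hRsub_of_top
          rw [trans_apply', Equiv.toPEquiv_apply, Option.bind_some]
          have : Tlow n ((w:ℕ)+1) top = w := by
            have ht : (top : Fin n) = ⟨n-1, by omega⟩ := rfl
            rw [ht, Tlow_top n w w.2]
          rw [this, ← PEquiv.eq_some_iff, h2]
        · rw [trans_apply', Equiv.toPEquiv_apply, Option.bind_some]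
          have : Tlow n ((w:ℕ)+1) ⟨n-2, by omega⟩ = top := by
            rw [Tlow_pred n w (by omega) (by omega)]
          rw [this, h1]
        · show (Equiv.toPEquiv (Tup n ((w:ℕ)+1))).trans
              ((Equiv.toPEquiv (Tlow n ((w:ℕ)+1))).trans σ) = σ
          rw [← PEquiv.trans_assoc, ← Equiv.toPEquiv_trans, Tup_eq]
          have : ((Tlow n ((w:ℕ)+1))⁻¹ : Equiv.Perm (Fin n)).trans (Tlow n ((w:ℕ)+1)) =
              Equiv.refl (Fin n) := by
            rw [show ((Tlow n ((w:ℕ)+1))⁻¹ : Equiv.Perm (Fin n))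
              = (Tlow n ((w:ℕ)+1)).symm from rfl]
            exact Equiv.symm_trans_self _
          rw [this, Equiv.toPEquiv_refl, PEquiv.refl_trans]
    · -- type 1
      refine ⟨Sum.inl v, ?_⟩
      refine ⟨σ.trans (Tlow n ((v:ℕ)+1)).symm.toPEquiv, ?_, ?_⟩
      · apply hRsub_of_top
        rw [trans_apply', h1, Option.bind_some, Equiv.toPEquiv_apply]
        congr 1
        rw [Equiv.symm_apply_eq]
        have ht : (top : Fin n) = ⟨n-1, by omega⟩ := rfl
        rw [ht, Tlow_top n v v.2]
      · show (σ.trans (Equiv.symm (Tlow n ((v:ℕ)+1))).toPEquiv).trans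
            (Equiv.toPEquiv (Tlow n ((v:ℕ)+1))) = σ
        rw [PEquiv.trans_assoc, ← Equiv.toPEquiv_trans, Equiv.symm_trans_self,
          Equiv.toPEquiv_refl, PEquiv.trans_refl]
end
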